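/- arXiv:math/0409496 — 3 statements merged into one kernel-verified Lean document; each statement's English description precedes it below -/
import Mathlib

section
/- Let R be a graded Gorenstein K-algebra, and suppose M and N are linked by C, and N and M' are linked by C'. Put s = r(C) - r(C') + a(C) - a(C'). Then for all integers j: h_{M'}(j) = h_M(j+s) + h_{C'}(j) - h_C(j+s). -/
open CategoryTheory Opposite DirectSum

noncomputable section

/-- The Ext modules `Ext^n_R(M, N)`. -/
noncomputable def RExt (R : Type) [CommRing R] (M N : ModuleCat R) (n : ℕ) : ModuleCat R :=
  ((Ext R (ModuleCat R) n).obj (op M)).obj N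

/-- The (Krull) dimension of a module. -/
noncomputable def mDim (R : Type) [CommRing R] (M : Type) [AddCommGroup M] [Module R M] :
    WithBot (WithTop ℕ) :=
  ringKrullDim (R ⧸ Module.annihilator R M)

/-- A graded Gorenstein algebra: Noetherian of finite self-injective dimension. -/
def IsGorensteinGradedRing (R : Type) [CommRing R] : Prop :=
  IsNoetherianRing R ∧
    ∃ n : ℕ, ∀ (N : ModuleCat R) (i : ℕ), n < i →
      Subsingleton (RExt R N (ModuleCat.of R R) i)

/-- The Hilbert function of a graded vector space. -/
noncomputable def hilb (K : Type) [Field K] {M : Type} [AddCommGroup M] [Module K M]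
    (ℳ : ℤ → Submodule K M) (j : ℤ) : ℕ :=
  Module.finrank K (ℳ j)

/-- The irrelevant maximal ideal of a graded algebra. -/
def irrelIdeal (K R : Type) [Field K] [CommRing R] [Algebra K R]
    (𝒜 : ℤ → Submodule K R) : Ideal R :=
  Ideal.span (⋃ i : {i : ℤ // 0 < i}, ((𝒜 i.1 : Set R)))

/-- A short exact sequence `0 → A → B → C → 0`. -/
def IsSES (R : Type) [CommRing R] {A B C : Type} [AddCommGroup A] [Module R A]
    [AddCommGroup B] [Module R B] [AddCommGroup C] [Module R C]
    (f : A →ₗ[R] B) (g : B →ₗ[R] C) : Prop :=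
  Function.Injective f ∧ Function.Surjective g ∧ Function.Exact f g

end

/-!
Hilbert functions are additive along graded short exact sequences, degree by degree, because a
graded exact sequence restricts to an exact sequence of finite-dimensional vector spaces in each
degree. Both linkage sequences start with the same module `K_N`, shifted by `r(C) + a(C) - 1` and
`r(C') + a(C') - 1` respectively; comparing the two at matching degrees eliminates `h_{K_N}`.
-/

theorem IsSES.finrank_eq_add {K U V W : Type} [Field K] [AddCommGroup U] [Module K U]
    [AddCommGroup V] [Module K V] [AddCommGroup W] [Module K W] [FiniteDimensional K V]
    {f : U →ₗ[K] V} {g : V →ₗ[K] W} (h : IsSES K f g) :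
    Module.finrank K V = Module.finrank K U + Module.finrank K W := by
  obtain ⟨hinj, hsurj, hexact⟩ := h
  rw [← g.finrank_range_add_finrank_ker, LinearMap.range_eq_top.mpr hsurj, finrank_top,
    hexact.linearMap_ker_eq, LinearMap.finrank_range_of_inj hinj, add_comm]

theorem DirectSum.decompose_map_of_mapsTo {ι A B σ τ F : Type*} [DecidableEq ι]
    [AddRightCancelMonoid ι] [AddCommMonoid A] [AddCommMonoid B] [SetLike σ A]
    [AddSubmonoidClass σ A] [SetLike τ B] [AddSubmonoidClass τ B] [FunLike F A B]
    [AddMonoidHomClass F A B] (𝒜 : ι → σ) (ℬ : ι → τ) [Decomposition 𝒜]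
    [Decomposition ℬ] {φ : F} {d : ι} (hφ : ∀ i, ∀ x ∈ 𝒜 i, φ x ∈ ℬ (i + d))
    (a : A) (i : ι) :
    (decompose ℬ (φ a) (i + d) : B) = φ (decompose 𝒜 a i) := by
  induction a using Decomposition.inductionOn 𝒜 with
  | zero => simp
  | @homogeneous j x =>
    obtain rfl | hij := eq_or_ne j i
    · rw [decompose_of_mem_same ℬ (hφ j x x.2), decompose_of_mem_same 𝒜 x.2]
    · rw [decompose_of_mem_ne ℬ (hφ j x x.2) (fun h => hij (add_right_cancel h)),
        decompose_of_mem_ne 𝒜 x.2 hij, map_zero]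
  | add x y hx hy =>
    simp only [map_add, decompose_add, add_apply, AddMemClass.coe_add, hx, hy]

section Graded

variable {K R A B C : Type} [Field K] [CommRing R] [Algebra K R]
  [AddCommGroup A] [Module R A] [Module K A] [IsScalarTower K R A]
  [AddCommGroup B] [Module R B] [Module K B] [IsScalarTower K R B]
  [AddCommGroup C] [Module R C] [Module K C] [IsScalarTower K R C]
  {𝒜 : ℤ → Submodule K A} {ℬ : ℤ → Submodule K B} {𝒞 : ℤ → Submodule K C}
  [Decomposition 𝒜] [Decomposition ℬ] [Decomposition 𝒞]
  {f : A →ₗ[R] B} {g : B →ₗ[R] C} {d : ℤ}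

theorem IsSES.restrict_degree (h : IsSES R f g) (hf : ∀ i, ∀ x ∈ 𝒜 i, f x ∈ ℬ (i + d))
    (hg : ∀ i, ∀ x ∈ ℬ i, g x ∈ 𝒞 i) (i : ℤ) :
    IsSES K ((f.restrictScalars K).restrict (hf i))
      ((g.restrictScalars K).restrict (hg (i + d))) := by
  obtain ⟨hinj, hsurj, hexact⟩ := h
  refine ⟨fun x y hxy => Subtype.ext (hinj (congrArg Subtype.val hxy)), ?_, ?_⟩
  · rintro ⟨z, hz⟩
    obtain ⟨y, rfl⟩ := hsurj z
    have hgy := decompose_map_of_mapsTo ℬ 𝒞 (φ := g) (d := 0) (by simpa using hg) y (i + d)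
    rw [add_zero, decompose_of_mem_same 𝒞 hz] at hgy
    exact ⟨⟨_, (decompose ℬ y (i + d)).2⟩, Subtype.ext hgy.symm⟩
  · rintro ⟨y, hy⟩
    refine (Subtype.ext_iff.trans (hexact y)).trans ⟨?_, ?_⟩
    · rintro ⟨x, rfl⟩
      refine ⟨⟨_, (decompose 𝒜 x i).2⟩, Subtype.ext ?_⟩
      exact (decompose_map_of_mapsTo 𝒜 ℬ hf x i).symm.trans (decompose_of_mem_same ℬ hy)
    · rintro ⟨x, hx⟩
      exact ⟨x, congrArg Subtype.val hx⟩

theorem IsSES.hilb_eq_add (h : IsSES R f g) (hf : ∀ i, ∀ x ∈ 𝒜 i, f x ∈ ℬ (i + d))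
    (hg : ∀ i, ∀ x ∈ ℬ i, g x ∈ 𝒞 i) {i j : ℤ} (hij : i + d = j) [FiniteDimensional K (ℬ j)] :
    hilb K ℬ j = hilb K 𝒜 i + hilb K 𝒞 j := by
  subst hij
  exact (h.restrict_degree hf hg i).finrank_eq_add

end Graded

/-- Suppose the graded modules `M, N` are linked by `C` and `N, M'` are
linked by `C'`.  Put `s = r(C) - r(C') + a(C) - a(C')`.  Then for all integers `j`:
`h_{M'}(j) = h_M(j + s) + h_{C'}(j) - h_C(j + s)`.  The two linkages are given by the
graded exact sequences `0 → K_N(1 - r(C) - a(C)) → C → M → 0` and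
`0 → K_N(1 - r(C') - a(C')) → C' → M' → 0`. -/
theorem hilbert_function_under_even_liaison
    (K R : Type) [Field K] [CommRing R] [Algebra K R]
    (𝒜 : ℤ → Submodule K R) [GradedAlgebra 𝒜] (hGor : IsGorensteinGradedRing R)
    (M : Type) [AddCommGroup M] [Module R M] [Module K M] [IsScalarTower K R M]
    (ℳ : ℤ → Submodule K M) [SetLike.GradedSMul 𝒜 ℳ] [DirectSum.Decomposition ℳ]
    [∀ j : ℤ, Module.Finite K (ℳ j)] [Module.Finite R M]
    (M' : Type) [AddCommGroup M'] [Module R M'] [Module K M'] [IsScalarTower K R M']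
    (ℳ' : ℤ → Submodule K M') [SetLike.GradedSMul 𝒜 ℳ'] [DirectSum.Decomposition ℳ']
    [∀ j : ℤ, Module.Finite K (ℳ' j)] [Module.Finite R M']
    (C : Type) [AddCommGroup C] [Module R C] [Module K C] [IsScalarTower K R C]
    (𝒞 : ℤ → Submodule K C) [SetLike.GradedSMul 𝒜 𝒞] [DirectSum.Decomposition 𝒞]
    [∀ j : ℤ, Module.Finite K (𝒞 j)] [Module.Finite R C]
    (C' : Type) [AddCommGroup C'] [Module R C'] [Module K C'] [IsScalarTower K R C']
    (𝒞' : ℤ → Submodule K C') [SetLike.GradedSMul 𝒜 𝒞'] [DirectSum.Decomposition 𝒞']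
    [∀ j : ℤ, Module.Finite K (𝒞' j)] [Module.Finite R C']
    -- the canonical module K_N of the middle module N
    (KN : Type) [AddCommGroup KN] [Module R KN] [Module K KN] [IsScalarTower K R KN]
    (𝒦 : ℤ → Submodule K KN) [SetLike.GradedSMul 𝒜 𝒦] [DirectSum.Decomposition 𝒦]
    [∀ j : ℤ, Module.Finite K (𝒦 j)]
    -- indices of regularity and initial degrees of C and C'
    (pC pC' : Polynomial ℚ)
    (hpC : ∃ N₀ : ℤ, ∀ j : ℤ, N₀ ≤ j → (hilb K 𝒞 j : ℚ) = pC.eval (j : ℚ))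
    (hpC' : ∃ N₀ : ℤ, ∀ j : ℤ, N₀ ≤ j → (hilb K 𝒞' j : ℚ) = pC'.eval (j : ℚ))
    (rC aC rC' aC' : ℤ)
    (hrC : IsLeast {i : ℤ | ∀ j : ℤ, i ≤ j → (hilb K 𝒞 j : ℚ) = pC.eval (j : ℚ)} rC)
    (haC : IsLeast {i : ℤ | 𝒞 i ≠ ⊥} aC)
    (hrC' : IsLeast {i : ℤ | ∀ j : ℤ, i ≤ j → (hilb K 𝒞' j : ℚ) = pC'.eval (j : ℚ)} rC')
    (haC' : IsLeast {i : ℤ | 𝒞' i ≠ ⊥} aC')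
    -- the graded exact sequence 0 → K_N(1 - r(C) - a(C)) → C → M → 0
    (f : KN →ₗ[R] C) (g : C →ₗ[R] M) (hses : IsSES R f g)
    (hf : ∀ (i : ℤ), ∀ x ∈ 𝒦 i, f x ∈ 𝒞 (i + (rC + aC - 1)))
    (hg : ∀ (i : ℤ), ∀ x ∈ 𝒞 i, g x ∈ ℳ i)
    -- the graded exact sequence 0 → K_N(1 - r(C') - a(C')) → C' → M' → 0
    (f' : KN →ₗ[R] C') (g' : C' →ₗ[R] M') (hses' : IsSES R f' g')
    (hf' : ∀ (i : ℤ), ∀ x ∈ 𝒦 i, f' x ∈ 𝒞' (i + (rC' + aC' - 1)))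
    (hg' : ∀ (i : ℤ), ∀ x ∈ 𝒞' i, g' x ∈ ℳ' i) :
    ∀ j : ℤ, (hilb K ℳ' j : ℤ) =
      (hilb K ℳ (j + (rC - rC' + aC - aC')) : ℤ) + (hilb K 𝒞' j : ℤ) -
        (hilb K 𝒞 (j + (rC - rC' + aC - aC')) : ℤ) := by
  intro j
  have hC := hses.hilb_eq_add hf hg (i := j - (rC' + aC' - 1)) (j := j + (rC - rC' + aC - aC'))
    (by ring)
  have hC' := hses'.hilb_eq_add hf' hg' (i := j - (rC' + aC' - 1)) (j := j) (by ring)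
  omega
end

section
/- Let R be an arbitrary integral domain (in the graded case assume [R]_1 ≠ 0), and let v, w ∈ R^n be non-trivial column vectors. Then there exist a symmetric matrix S ∈ R^{n×n} and an element λ ∈ R with λ ≠ 0, det S ≠ 0, and S v = λ w. -/
/-!
Pick `i` with `v i ≠ 0` and let `P` be the identity matrix with its `i`-th column replaced by `v`,
so that `P eᵢ = v` and `det P = v i ≠ 0`. Congruence by `adj P` reduces the problem to `v = eᵢ`:
if `M` is symmetric and nondegenerate with `M eᵢ = Pᵀ w`, then `S = (adj P)ᵀ M (adj P)` satisfies
`S v = (det P)² w`, because `adj P · P = P · adj P = det P`. Such an `M` exists for every nonzero `u`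
in place of `Pᵀ w`: a scalar matrix if `u` is a multiple of `eᵢ`, and otherwise, for some `j ≠ i`
with `u j ≠ 0`, the arrowhead matrix with `i`-th row and column `u`, whose determinant is `-(u j)²`.
-/

open Matrix

namespace Matrix

theorem IsSymm.transpose_mul_mul {m n R : Type*} [Fintype m] [CommSemiring R]
    {M : Matrix m m R} (hM : M.IsSymm) (Q : Matrix m n R) : (Qᵀ * M * Q).IsSymm := by
  rw [IsSymm, transpose_mul, transpose_mul, transpose_transpose, hM.eq, Matrix.mul_assoc]

variable {n R : Type*} [DecidableEq n] [CommRing R]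

/-- The `-u i` on the diagonal cancels the doubled `(i, i)` entry. -/
def arrowheadMatrix (i j : n) (u : n → R) : Matrix n n R :=
  vecMulVec u (Pi.single i 1) + vecMulVec (Pi.single i 1) u +
    diagonal fun k => if k = i then -u i else if k = j then 0 else 1

theorem isSymm_arrowheadMatrix (i j : n) (u : n → R) : (arrowheadMatrix i j u).IsSymm := by
  simp only [arrowheadMatrix, IsSymm, transpose_add, transpose_vecMulVec, diagonal_transpose,
    add_comm (vecMulVec u _)]

variable [Fintype n]

theorem det_updateCol_one (i : n) (v : n → R) : ((1 : Matrix n n R).updateCol i v).det = v i := by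
  rw [← cramer_apply, cramer_one]
  rfl

theorem updateCol_one_mulVec_single_one (i : n) (v : n → R) :
    (1 : Matrix n n R).updateCol i v *ᵥ Pi.single i 1 = v := by
  rw [mulVec_single_one]; ext k; simp

theorem transpose_adjugate_mul_mul_adjugate_mulVec {P M : Matrix n n R} {e w : n → R}
    (hM : M *ᵥ e = Pᵀ *ᵥ w) : (P.adjugateᵀ * M * P.adjugate) *ᵥ (P *ᵥ e) = P.det ^ 2 • w := by
  rw [← mulVec_mulVec, ← mulVec_mulVec, mulVec_mulVec e, adjugate_mul, smul_mulVec, one_mulVec,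
    mulVec_smul, hM, mulVec_smul, mulVec_mulVec, ← transpose_mul, mul_adjugate, transpose_smul,
    transpose_one, smul_mulVec, one_mulVec, smul_smul, sq]

theorem arrowheadMatrix_mulVec_apply (i j : n) (u x : n → R) (k : n) :
    (arrowheadMatrix i j u *ᵥ x) k = x i * u k + (Pi.single i (u ⬝ᵥ x) : n → R) k +
      (if k = i then -u i else if k = j then 0 else 1) * x k := by
  simp only [arrowheadMatrix, add_mulVec, vecMulVec_mulVec, mulVec_diagonal, Pi.add_apply,
    Pi.smul_apply, MulOpposite.smul_eq_mul_unop, MulOpposite.unop_op, single_one_dotProduct,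
    ← Pi.single_smul, one_mul, mul_comm (u k)]

theorem arrowheadMatrix_mulVec_single_one (i j : n) (u : n → R) :
    arrowheadMatrix i j u *ᵥ Pi.single i 1 = u := by
  ext k
  rw [arrowheadMatrix_mulVec_apply]
  by_cases hk : k = i <;> simp [hk]

variable [IsDomain R]

theorem det_arrowheadMatrix_ne_zero {i j : n} (hji : j ≠ i) {u : n → R} (hu : u j ≠ 0) :
    (arrowheadMatrix i j u).det ≠ 0 := by
  rw [Ne, ← exists_mulVec_eq_zero_iff]
  rintro ⟨x, hx, hMx⟩
  have row k : x i * u k + (Pi.single i (u ⬝ᵥ x) : n → R) k +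
      (if k = i then -u i else if k = j then 0 else 1) * x k = 0 := by
    rw [← arrowheadMatrix_mulVec_apply, hMx, Pi.zero_apply]
  have hxi : x i = 0 := by simpa [hji, hu] using row j
  have hxk k (hki : k ≠ i) (hkj : k ≠ j) : x k = 0 := by simpa [hki, hkj, hxi] using row k
  have hx_eq : x = Pi.single j (x j) := by
    ext k
    by_cases hkj : k = j
    · simp [hkj]
    · by_cases hki : k = i
      · simp [hki, hxi, hji]
      · simp [hkj, hxk k hki hkj]
  have hxj : x j = 0 := by
    have := row i
    rw [hx_eq] at this
    simpa [hji, hu] using this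
  exact hx (by rw [hx_eq, hxj, Pi.single_zero])

theorem exists_isSymm_det_ne_zero_mulVec_single_one_eq (i : n) {u : n → R} (hu : u ≠ 0) :
    ∃ M : Matrix n n R, M.IsSymm ∧ M.det ≠ 0 ∧ M *ᵥ Pi.single i 1 = u := by
  by_cases h : ∃ j ≠ i, u j ≠ 0
  · obtain ⟨j, hji, huj⟩ := h
    exact ⟨arrowheadMatrix i j u, isSymm_arrowheadMatrix i j u, det_arrowheadMatrix_ne_zero hji huj,
      arrowheadMatrix_mulVec_single_one i j u⟩
  · push Not at h
    have hu_eq : u = Pi.single i (u i) := by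
      ext k
      by_cases hki : k = i
      · simp [hki]
      · simp [hki, h k hki]
    have hui : u i ≠ 0 := fun hui => hu (by rw [hu_eq, hui, Pi.single_zero])
    refine ⟨u i • 1, isSymm_one.smul _, ?_, ?_⟩
    · rw [det_smul, det_one, mul_one]
      exact pow_ne_zero _ hui
    · rw [smul_mulVec, one_mulVec, ← Pi.single_smul, smul_eq_mul, mul_one, ← hu_eq]

end Matrix

/-- Let `R` be an integral domain and `v, w ∈ Rⁿ` nonzero column vectors.
Then there exist a symmetric matrix `S ∈ R^{n×n}` and `λ ∈ R` with `λ ≠ 0`, `det S ≠ 0`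
and `S v = λ w`. -/
theorem exists_symmetric_matrix_mulVec_eq_smul
    {R : Type} [CommRing R] [IsDomain R] {n : ℕ}
    (v w : Fin n → R) (hv : v ≠ 0) (hw : w ≠ 0) :
    ∃ (S : Matrix (Fin n) (Fin n) R) (l : R),
      S.IsSymm ∧ l ≠ 0 ∧ S.det ≠ 0 ∧ S.mulVec v = l • w := by
  obtain ⟨i, hvi⟩ := Function.ne_iff.mp hv
  set P := (1 : Matrix (Fin n) (Fin n) R).updateCol i v
  have hP : P.det ≠ 0 := by rwa [det_updateCol_one]
  have hPw : Pᵀ *ᵥ w ≠ 0 := fun h =>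
    (det_transpose P ▸ hP) (exists_mulVec_eq_zero_iff.mp ⟨w, hw, h⟩)
  obtain ⟨M, hMsymm, hMdet, hM⟩ := exists_isSymm_det_ne_zero_mulVec_single_one_eq i hPw
  refine ⟨P.adjugateᵀ * M * P.adjugate, P.det ^ 2, hMsymm.transpose_mul_mul _, pow_ne_zero 2 hP,
    ?_, ?_⟩
  · simp only [det_mul, det_transpose, det_adjugate]
    exact mul_ne_zero (mul_ne_zero (pow_ne_zero _ hP) hMdet) (pow_ne_zero _ hP)
  · rw [← updateCol_one_mulVec_single_one i v]
    exact transpose_adjugate_mul_mul_adjugate_mulVec hM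
end

section
/- Let R be an integral domain and let A = [[a, b],[c, A']] ∈ R^{n×n} be a block matrix with a ∈ R, b a nonzero row vector, c a nonzero column vector in R^{n-1}, A' ∈ R^{(n-1)×(n-1)}, and det A ≠ 0, det A' ≠ 0. Then A is linked (in one step) to a block diagonal matrix diag(λ, B') for some nonzero λ ∈ R and B' ∈ R^{(n-1)×(n-1)}; i.e., there exists such B with A·B^t equivalent to a symmetric matrix of nonzero determinant. -/
/-- Two square matrices `A`, `B` are linked in one step if `A ⬝ Bᵀ` is equivalent to a
symmetric matrix whose determinant is a non-zero divisor. -/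
def MatrixLinkedOneStep {R : Type} [CommRing R] {n : Type} [Fintype n] [DecidableEq n]
    (A B : Matrix n n R) : Prop :=
  ∃ P Q : Matrix n n R, IsUnit P.det ∧ IsUnit Q.det ∧
    (P * (A * B.transpose) * Q).IsSymm ∧
    (P * (A * B.transpose) * Q).det ∈ nonZeroDivisors R

/-! For nonzero vectors `u`, `c` over a domain there is a symmetric `S` with `det S ≠ 0` and
`S u = λ c`, `λ ≠ 0`. Writing `S = Mᵀ D M` with `M u` a multiple of the basis vector `eᵢ`, this
reduces to `u = eᵢ`, i.e. to prescribing the `i`-th column of a nondegenerate symmetric `D`, which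
an arrow matrix does. For `u = adj(A')ᵀ bᵀ` and `B' = (adj(A') S)ᵀ` the product
`A · diag(λ, B')ᵀ = [[λ a, b adj(A') S], [λ c, det A' • S]]` is then symmetric with nonzero
determinant. -/

open Matrix

namespace Matrix

section

variable {α ι n : Type*}

theorem isSymm_of_subsingleton [Subsingleton n] (A : Matrix n n α) : A.IsSymm :=
  IsSymm.ext fun i j => by rw [Subsingleton.elim i j]

theorem apply_default_ne_zero [Zero α] [Unique ι] {M : Matrix ι n α} (h : M ≠ 0) :
    M default ≠ 0 :=
  fun h0 => h <| funext fun i => by rw [Unique.eq_default i, h0]; rfl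

end

variable {R n : Type*} [CommRing R] [IsDomain R] [Fintype n] [DecidableEq n]

theorem det_ne_zero_of_mulVec_eq_zero {M : Matrix n n R} (h : ∀ v, M *ᵥ v = 0 → v = 0) :
    M.det ≠ 0 := fun h0 =>
  let ⟨v, hv, hMv⟩ := exists_mulVec_eq_zero_iff.2 h0
  hv (h v hMv)

theorem adjugate_mulVec_ne_zero {A : Matrix n n R} (hA : A.det ≠ 0) {v : n → R} (hv : v ≠ 0) :
    A.adjugate *ᵥ v ≠ 0 := fun h => by
  have hAv : A *ᵥ (A.adjugate *ᵥ v) = A.det • v := by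
    rw [mulVec_mulVec, mul_adjugate, smul_mulVec, one_mulVec]
  rw [h, mulVec_zero, eq_comm, smul_eq_zero] at hAv
  exact hAv.elim hA hv

theorem exists_det_ne_zero_mulVec_eq_smul_single {u : n → R} {i : n} (hu : u i ≠ 0) :
    ∃ M : Matrix n n R, M.det ≠ 0 ∧ ∃ α : R, α ≠ 0 ∧ M *ᵥ u = α • Pi.single i 1 := by
  set u' := Function.update u i 0
  set M := u i • (1 : Matrix n n R) - vecMulVec u' (Pi.single i 1)
  have hM : ∀ v j, (M *ᵥ v) j = u i * v j - u' j * v i := by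
    intro v j
    simp [M, sub_mulVec, vecMulVec_mulVec, smul_mulVec, mul_comm]
  refine ⟨M, det_ne_zero_of_mulVec_eq_zero fun v hv => ?_, u i * u i, mul_ne_zero hu hu, ?_⟩
  · have hvi : v i = 0 := by
      simpa [hM, u', hu] using congrFun hv i
    funext j
    simpa [hM, hvi, hu] using congrFun hv j
  · funext j
    by_cases hj : j = i
    · subst hj; simp [hM, u']
    · simp [hM, u', hj, mul_comm]

theorem exists_isSymm_det_ne_zero_mulVec_single_eq {y : n → R} (hy : y ≠ 0) (i : n) :
    ∃ D : Matrix n n R, D.IsSymm ∧ D.det ≠ 0 ∧ D *ᵥ Pi.single i 1 = y := by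
  by_cases hsupp : ∃ k ≠ i, y k ≠ 0
  · obtain ⟨k, hki, hk⟩ := hsupp
    -- The arrow matrix with row and column `i` equal to `y`; the zero diagonal entry at `k`
    -- makes it nondegenerate whatever `y i` is.
    set y' := Function.update y i 0
    set d : n → R := fun j => if j = i then y i else if j = k then 0 else 1
    set X := vecMulVec (Pi.single i 1) y'
    have hD : ∀ v j, ((X + Xᵀ + diagonal d) *ᵥ v) j
        = (Pi.single i 1 : n → R) j * (y' ⬝ᵥ v) + v i * y' j + d j * v j := by
      intro v j
      simp [X, add_mulVec, vecMulVec_mulVec, mulVec_diagonal, mul_comm]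
    refine ⟨X + Xᵀ + diagonal d, (isSymm_add_transpose_self X).add (isSymm_diagonal d),
      det_ne_zero_of_mulVec_eq_zero fun v hv => ?_, ?_⟩
    · have hvi : v i = 0 := by
        simpa [hD, d, y', hki, hk] using congrFun hv k
      have hvj : ∀ j ≠ k, v j = 0 := by
        intro j hjk
        by_cases hji : j = i
        · rwa [hji]
        · simpa [hD, d, hji, hjk, hvi] using congrFun hv j
      have hvk : v k = 0 := by
        have hdot : y' ⬝ᵥ v = y k * v k := by
          rw [dotProduct, Finset.sum_eq_single k (fun j _ hjk => by simp [hvj j hjk]) (by simp)]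
          simp [y', hki]
        simpa [hD, d, hvi, hdot, hk] using congrFun hv i
      funext j
      by_cases hjk : j = k
      · rw [hjk, hvk]; rfl
      · exact hvj j hjk
    · funext j
      by_cases hji : j = i
      · subst hji; simp [hD, d, y']
      · simp [hD, d, y', hji]
  · push Not at hsupp
    have hyi : y i ≠ 0 := fun h => hy <| funext fun j => by
      by_cases hji : j = i
      · rw [hji, h]; rfl
      · exact hsupp j hji
    refine ⟨y i • 1, isSymm_one.smul _, by simp [hyi], funext fun j => ?_⟩
    by_cases hji : j = i
    · subst hji; simp
    · simp [hji, hsupp j hji]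

theorem exists_isSymm_det_ne_zero_mulVec_eq_smul {u c : n → R} (hu : u ≠ 0) (hc : c ≠ 0) :
    ∃ S : Matrix n n R, S.IsSymm ∧ S.det ≠ 0 ∧ ∃ l : R, l ≠ 0 ∧ S *ᵥ u = l • c := by
  obtain ⟨i, hi⟩ := Function.ne_iff.1 hu
  obtain ⟨M, hM, α, hα, hMu⟩ := exists_det_ne_zero_mulVec_eq_smul_single hi
  have hMy : Mᵀ *ᵥ (Mᵀ.adjugate *ᵥ c) = M.det • c := by
    rw [mulVec_mulVec, mul_adjugate, det_transpose, smul_mulVec, one_mulVec]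
  obtain ⟨D, hD, hDdet, hDi⟩ := exists_isSymm_det_ne_zero_mulVec_single_eq
    (adjugate_mulVec_ne_zero (by rwa [det_transpose]) hc) i
  refine ⟨Mᵀ * D * M, ?_, ?_, α * M.det, mul_ne_zero hα hM, ?_⟩
  · simp [IsSymm, transpose_mul, hD.eq, Matrix.mul_assoc]
  · simp [hM, hDdet]
  · rw [← mulVec_mulVec, hMu, ← mulVec_mulVec, mulVec_smul, mulVec_smul, hDi, hMy, smul_smul]

end Matrix

theorem MatrixLinkedOneStep.of_isSymm {R : Type} [CommRing R] {n : Type} [Fintype n]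
    [DecidableEq n] {A B : Matrix n n R} (hS : (A * Bᵀ).IsSymm)
    (hdet : (A * Bᵀ).det ∈ nonZeroDivisors R) : MatrixLinkedOneStep A B :=
  ⟨1, 1, by simp, by simp, by simpa using hS, by simpa using hdet⟩

/-- Let `R` be an integral domain and `A = [[a, b], [c, A']]` a block
matrix with `b ≠ 0`, `c ≠ 0`, `det A ≠ 0` and `det A' ≠ 0`.  Then `A` is linked in one
step to a block diagonal matrix `diag(λ, B')` with `λ ≠ 0`. -/
theorem block_matrix_linked_to_block_diagonal
    {R : Type} [CommRing R] [IsDomain R] {m : ℕ}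
    (a : Matrix (Fin 1) (Fin 1) R) (b : Matrix (Fin 1) (Fin m) R)
    (c : Matrix (Fin m) (Fin 1) R) (A' : Matrix (Fin m) (Fin m) R)
    (hb : b ≠ 0) (hc : c ≠ 0)
    (hA : (Matrix.fromBlocks a b c A').det ≠ 0) (hA' : A'.det ≠ 0) :
    ∃ (l : R) (B' : Matrix (Fin m) (Fin m) R), l ≠ 0 ∧
      MatrixLinkedOneStep (Matrix.fromBlocks a b c A')
        (Matrix.fromBlocks (l • (1 : Matrix (Fin 1) (Fin 1) R)) 0 0 B') := by
  have hu : A'.adjugateᵀ *ᵥ b 0 ≠ 0 := by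
    rw [adjugate_transpose]
    exact adjugate_mulVec_ne_zero (by rwa [det_transpose]) (apply_default_ne_zero hb)
  obtain ⟨S, hS, hSdet, l, hl, hSu⟩ := exists_isSymm_det_ne_zero_mulVec_eq_smul hu
    (apply_default_ne_zero (transpose_eq_zero.not.2 hc))
  have hprod : fromBlocks a b c A' * (fromBlocks (l • 1) 0 0 (A'.adjugate * S)ᵀ)ᵀ
      = fromBlocks (l • a) (b * A'.adjugate * S) (l • c) (A'.det • S) := by
    simp [fromBlocks_transpose, fromBlocks_multiply, ← Matrix.mul_assoc, mul_adjugate]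
  have hbc : (b * A'.adjugate * S)ᵀ = l • c := by
    rw [transpose_mul, transpose_mul, hS.eq, ← Matrix.mul_assoc]
    ext j i
    rw [Subsingleton.elim i 0]
    rw [mulVec_mulVec] at hSu
    exact congrFun hSu j
  refine ⟨l, (A'.adjugate * S)ᵀ, hl, .of_isSymm ?_ ?_⟩
  · rw [hprod]
    exact (isSymm_of_subsingleton _).fromBlocks hbc (hS.smul _)
  · rw [det_mul]
    refine mem_nonZeroDivisors_of_ne_zero (mul_ne_zero hA ?_)
    simp [det_adjugate, hl, hA', hSdet]
end
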